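/- For the polynomial P_n(z) = Σ_{k=1}^n z^{2^k}, there exist absolute positive constants c₁, c₂ with c₁ n ≤ ∫_𝔻 |P_n'(z)| dA(z) ≤ c₂ n, while ‖P_n‖_{H^2} = sqrt(n). Consequently ∫_𝔻|P_n'| dA / ‖P_n‖_{H^2} ≥ c sqrt(n) = c sqrt(log₂ deg P_n) for an absolute constant c > 0. -/

import Mathlib

open Complex Metric MeasureTheory Real Set
open scoped Classical NNReal ENNReal

noncomputable def circInt (f : ℂ → ℂ) (p r : ℝ) : ℝ :=
  (∫ t in (0:ℝ)..(2*π), ‖f ((r : ℂ) * Complex.exp (t * Complex.I))‖ ^ p) / (2*π)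

noncomputable def hardyNorm (p : ℝ) (f : ℂ → ℂ) : ℝ :=
  ⨆ r : Ioo (0:ℝ) 1, (circInt f p (r : ℝ)) ^ (1/p)

/-- `f` belongs to the Hardy space `H^p` of the unit disk. -/
def MemHp (p : ℝ) (f : ℂ → ℂ) : Prop :=
  DifferentiableOn ℂ f (ball (0:ℂ) 1) ∧
    BddAbove (range fun r : Ioo (0:ℝ) 1 => (circInt f p (r : ℝ)) ^ (1/p))

noncomputable def supNorm (f : ℂ → ℂ) : ℝ := ⨆ z : ball (0:ℂ) 1, ‖f (z : ℂ)‖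

/-- `f` belongs to `H^∞` of the unit disk. -/
def MemHinf (f : ℂ → ℂ) : Prop :=
  DifferentiableOn ℂ f (ball (0:ℂ) 1) ∧ BddAbove (range fun z : ball (0:ℂ) 1 => ‖f (z : ℂ)‖)

/-- Number of solutions of `f z = w` in the unit disk, counted with multiplicity. -/
noncomputable def valCount (f : ℂ → ℂ) (w : ℂ) : ℝ≥0∞ :=
  ∑' z : ball (0:ℂ) 1,
    if h : AnalyticAt ℂ (fun ζ => f ζ - w) (z : ℂ) then (analyticOrderAt (fun ζ => f ζ - w) (z : ℂ) : ℝ≥0∞) else 0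

/-- `f` is mean `n`-valent in the unit disk. -/
def MeanValent (n : ℝ) (f : ℂ → ℂ) : Prop :=
  ∀ R > 0, (1/π) * ∫ r in (0:ℝ)..R, (∫ t in (0:ℝ)..(2*π),
      (valCount f ((r : ℂ) * Complex.exp (t * Complex.I))).toReal) * r ≤ n * R^2

noncomputable def maxMod (f : ℂ → ℂ) (r : ℝ) : ℝ := ⨆ z : sphere (0:ℂ) r, ‖f (z : ℂ)‖

/-- `B` is a finite Blaschke product of degree `n`. -/
def IsBlaschke (n : ℕ) (B : ℂ → ℂ) : Prop :=
  ∃ (c : ℂ) (a : Fin n → ℂ), ‖c‖ = 1 ∧ (∀ k, ‖a k‖ < 1) ∧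
    ∀ z, B z = c * ∏ k, (z - a k) / (1 - (starRingEnd ℂ) (a k) * z)

/-- `g` coincides on the unit disk with a rational function of degree at most `n`
whose poles lie outside the closed unit disk. -/
def IsRatOut (n : ℕ) (g : ℂ → ℂ) : Prop :=
  ∃ P Q : Polynomial ℂ, P.natDegree ≤ n ∧ Q.natDegree ≤ n ∧
    (∀ z : ℂ, ‖z‖ ≤ 1 → Q.eval z ≠ 0) ∧ ∀ z ∈ ball (0:ℂ) 1, g z = P.eval z / Q.eval z

noncomputable def Pn (n : ℕ) : ℂ → ℂ := fun z => ∑ k ∈ Finset.Icc 1 n, z ^ (2^k)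

/-!
Polar coordinates turn `∫_𝔻 |P_n'| dA` into `∫₀¹ r M(r) dr`, where `M(r)` is the integral of
`|P_n'|` over the circle of radius `r`. Since `P_n'(z) = Σ 2^k z^(2^k - 1)` has distinct
exponents, orthogonality of the characters `e^{imt}` bounds each term `2π 2^k r^(2^k - 1)` by
`M(r)`, while the triangle inequality bounds `M(r)` by their sum. On the annulus
`1 - 2^(-k) ≤ r ≤ 1 - 2^(-k-1)` of width `2^(-k-1)` one has `r^(2^k) ≥ 1/4`, so each of the `n`
annuli contributes at least `π/4`; the sum bound integrates to `2π Σ 2^k / (2^k + 1) ≤ 2πn`.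
The Hardy norm is Parseval: the circle means of `|P_n|²` are `Σ r^(2^(k+1))`, increasing to `n`.
-/

open ComplexConjugate Filter Topology

def monomialSum {ι : Type*} (s : Finset ι) (c : ι → ℂ) (e : ι → ℕ) (z : ℂ) : ℂ :=
  ∑ i ∈ s, c i * z ^ e i

lemma hasDerivAt_monomialSum {ι : Type*} (s : Finset ι) (c : ι → ℂ) (e : ι → ℕ) (z : ℂ) :
    HasDerivAt (monomialSum s c e)
      (monomialSum s (fun i => c i * e i) (fun i => e i - 1) z) z := by
  unfold monomialSum
  refine HasDerivAt.fun_sum fun i _ => ?_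
  simpa [mul_assoc] using (hasDerivAt_pow (e i) z).const_mul (c i)

lemma integral_exp_natCast_sub_mul_I (a b : ℕ) :
    ∫ t in (0:ℝ)..2 * π, exp ((a - b : ℂ) * (t * I)) = if a = b then (2 * π : ℂ) else 0 := by
  split_ifs with hab
  · simp [hab]
  · have hne : ((a : ℂ) - b) * I ≠ 0 := by
      simpa [sub_eq_zero] using hab
    simp_rw [← mul_assoc, mul_right_comm _ _ I]
    rw [integral_exp_mul_complex hne, div_eq_zero_iff, sub_eq_zero]
    left
    have : ((a : ℂ) - b) * I * (2 * π) = ((a - b : ℤ) : ℂ) * (2 * π * I) := by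
      push_cast; ring
    rw [ofReal_zero, mul_zero, Complex.exp_zero, ofReal_mul, ofReal_ofNat, this,
      exp_int_mul_two_pi_mul_I]

lemma integral_circleMap_pow_mul_exp_neg (r : ℝ) (a b : ℕ) :
    ∫ t in (0:ℝ)..2 * π, circleMap 0 r t ^ a * exp (-(b * (t * I)))
      = if a = b then 2 * π * (r : ℂ) ^ a else 0 := by
  have h : ∀ t : ℝ, circleMap 0 r t ^ a * exp (-(b * (t * I)))
      = (r : ℂ) ^ a * exp ((a - b : ℂ) * (t * I)) := by
    intro t
    rw [circleMap_zero, mul_pow, ← Complex.exp_nat_mul, mul_assoc, ← Complex.exp_add]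
    ring_nf
  simp_rw [h, intervalIntegral.integral_const_mul, integral_exp_natCast_sub_mul_I]
  split_ifs <;> ring

lemma norm_exp_neg_natCast_mul_mul_I (m : ℕ) (t : ℝ) : ‖exp (-(m * (t * I)))‖ = 1 := by
  rw [show -((m : ℂ) * (t * I)) = ((-(m * t) : ℝ) : ℂ) * I by push_cast; ring,
    norm_exp_ofReal_mul_I]

section MonomialSum

variable {ι : Type*} {s : Finset ι} {c : ι → ℂ} {e : ι → ℕ}

lemma integral_monomialSum_circleMap_mul_exp_neg (he : Set.InjOn e s) {j : ι} (hj : j ∈ s)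
    (r : ℝ) :
    ∫ t in (0:ℝ)..2 * π, monomialSum s c e (circleMap 0 r t) * exp (-(e j * (t * I)))
      = 2 * π * c j * (r : ℂ) ^ e j := by
  have hint : ∀ i ∈ s, IntervalIntegrable
      (fun t : ℝ => c i * circleMap 0 r t ^ e i * exp (-(e j * (t * I)))) volume 0 (2 * π) :=
    fun i _ => by apply Continuous.intervalIntegrable; fun_prop
  simp_rw [monomialSum, Finset.sum_mul]
  rw [intervalIntegral.integral_finsetSum hint]
  simp_rw [mul_assoc, intervalIntegral.integral_const_mul, integral_circleMap_pow_mul_exp_neg]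
  rw [Finset.sum_eq_single j (fun i hi hij => by rw [if_neg (he.ne hi hj hij), mul_zero])
    (absurd hj), if_pos rfl]
  ring

lemma two_pi_mul_norm_mul_pow_le_integral_norm_monomialSum (he : Set.InjOn e s) {j : ι}
    (hj : j ∈ s) (r : ℝ) :
    2 * π * ‖c j‖ * |r| ^ e j ≤ ∫ t in (0:ℝ)..2 * π, ‖monomialSum s c e (circleMap 0 r t)‖ := by
  calc 2 * π * ‖c j‖ * |r| ^ e j
      = ‖∫ t in (0:ℝ)..2 * π, monomialSum s c e (circleMap 0 r t) * exp (-(e j * (t * I)))‖ := by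
        rw [integral_monomialSum_circleMap_mul_exp_neg he hj, norm_mul, norm_mul, norm_mul,
          norm_pow, norm_real, Real.norm_eq_abs]
        simp [abs_of_pos pi_pos]
    _ ≤ ∫ t in (0:ℝ)..2 * π, ‖monomialSum s c e (circleMap 0 r t) * exp (-(e j * (t * I)))‖ :=
        intervalIntegral.norm_integral_le_integral_norm (by positivity)
    _ = ∫ t in (0:ℝ)..2 * π, ‖monomialSum s c e (circleMap 0 r t)‖ := by
        simp_rw [norm_mul, norm_exp_neg_natCast_mul_mul_I, mul_one]

lemma integral_norm_monomialSum_le (r : ℝ) :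
    ∫ t in (0:ℝ)..2 * π, ‖monomialSum s c e (circleMap 0 r t)‖
      ≤ 2 * π * ∑ i ∈ s, ‖c i‖ * |r| ^ e i := by
  have hbound : ∀ t, ‖monomialSum s c e (circleMap 0 r t)‖ ≤ ∑ i ∈ s, ‖c i‖ * |r| ^ e i :=
    fun t => (norm_sum_le _ _).trans_eq <| by simp_rw [norm_mul, norm_pow, norm_circleMap_zero]
  calc ∫ t in (0:ℝ)..2 * π, ‖monomialSum s c e (circleMap 0 r t)‖
      ≤ ∫ _ in (0:ℝ)..2 * π, ∑ i ∈ s, ‖c i‖ * |r| ^ e i :=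
        intervalIntegral.integral_mono_on (by positivity)
          (by apply Continuous.intervalIntegrable; unfold monomialSum; fun_prop)
          intervalIntegrable_const fun t _ => hbound t
    _ = 2 * π * ∑ i ∈ s, ‖c i‖ * |r| ^ e i := by simp

lemma integral_norm_sq_monomialSum (he : Set.InjOn e s) (r : ℝ) :
    ∫ t in (0:ℝ)..2 * π, ‖monomialSum s c e (circleMap 0 r t)‖ ^ 2
      = 2 * π * ∑ i ∈ s, ‖c i‖ ^ 2 * r ^ (2 * e i) := by
  have hconj : ∀ t : ℝ, conj (monomialSum s c e (circleMap 0 r t))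
      = ∑ j ∈ s, conj (c j) * (r : ℂ) ^ e j * exp (-(e j * (t * I))) := by
    intro t
    simp_rw [monomialSum, map_sum, map_mul, map_pow, circleMap_zero, map_mul, conj_ofReal,
      ← exp_conj, map_mul, conj_ofReal, conj_I, mul_pow, ← Complex.exp_nat_mul]
    exact Finset.sum_congr rfl fun j _ => by ring_nf
  have hexpand : ∀ t : ℝ, ((‖monomialSum s c e (circleMap 0 r t)‖ ^ 2 : ℝ) : ℂ)
      = ∑ j ∈ s, conj (c j) * (r : ℂ) ^ e j *
          (monomialSum s c e (circleMap 0 r t) * exp (-(e j * (t * I)))) := by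
    intro t
    rw [ofReal_pow, ← mul_conj', hconj, Finset.mul_sum]
    exact Finset.sum_congr rfl fun j _ => by ring
  have hint : ∀ j ∈ s, IntervalIntegrable (fun t : ℝ => conj (c j) * (r : ℂ) ^ e j *
      (monomialSum s c e (circleMap 0 r t) * exp (-(e j * (t * I))))) volume 0 (2 * π) :=
    fun j _ => by apply Continuous.intervalIntegrable; unfold monomialSum; fun_prop
  apply ofReal_injective
  rw [← intervalIntegral.integral_ofReal]
  simp_rw [hexpand]
  rw [intervalIntegral.integral_finsetSum hint]
  rw [Finset.sum_congr rfl fun j hj => by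
    rw [intervalIntegral.integral_const_mul, integral_monomialSum_circleMap_mul_exp_neg he hj]]
  push_cast
  rw [Finset.mul_sum]
  refine Finset.sum_congr rfl fun j _ => ?_
  rw [← mul_conj', pow_mul]
  ring

end MonomialSum

lemma polarCoord_symm_eq_circleMap (p : ℝ × ℝ) :
    Complex.polarCoord.symm p = circleMap 0 p.1 p.2 := by
  simp [circleMap_zero, exp_mul_I, ofReal_cos, ofReal_sin]

lemma integral_ball_eq_integral_circleMap {g : ℂ → ℝ} (hg : Continuous g) {R : ℝ} (hR : 0 ≤ R) :
    ∫ z in ball (0:ℂ) R, g z = ∫ r in (0:ℝ)..R, r * ∫ t in (0:ℝ)..2 * π, g (circleMap 0 r t) := by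
  set F : ℝ × ℝ → ℝ := fun p => p.1 * g (circleMap 0 p.1 p.2)
  have hF : Continuous F := by fun_prop
  have hpolar : ∫ z in ball (0:ℂ) R, g z = ∫ p in Ioo 0 R ×ˢ Ioo (-π) π, F p := by
    have hS : MeasurableSet (Ioo 0 R ×ˢ Ioo (-π) π) := measurableSet_Ioo.prod measurableSet_Ioo
    have hST : Ioo 0 R ×ˢ Ioo (-π) π ⊆ polarCoord.target := prod_mono Ioo_subset_Ioi_self le_rfl
    rw [← integral_indicator measurableSet_ball, ← Complex.integral_comp_polarCoord_symm,
      ← inter_eq_self_of_subset_right hST, ← setIntegral_indicator hS]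
    refine setIntegral_congr_fun polarCoord.open_target.measurableSet fun p hp => ?_
    have hp1 : 0 < p.1 := hp.1
    simp only [polarCoord_symm_eq_circleMap, indicator, mem_ball_zero_iff, norm_circleMap_zero,
      abs_of_pos hp1, mem_prod, mem_Ioo, hp1, true_and, hp.2.1, hp.2.2, and_true, smul_eq_mul, F]
    split_ifs <;> simp
  have hint : IntegrableOn F (Ioo 0 R ×ˢ Ioo (-π) π) (volume.prod volume) :=
    (hF.continuousOn.integrableOn_compact (isCompact_Icc.prod isCompact_Icc)).mono_set
      (prod_mono Ioo_subset_Icc_self Ioo_subset_Icc_self)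
  have hinner : ∀ r : ℝ, ∫ θ in Ioo (-π) π, F (r, θ)
      = r * ∫ t in (0:ℝ)..2 * π, g (circleMap 0 r t) := by
    intro r
    have hper := ((periodic_circleMap 0 r).comp g).intervalIntegral_add_eq (-π) 0
    rw [← integral_Ioc_eq_integral_Ioo, ← intervalIntegral.integral_of_le (by linarith [pi_pos]),
      intervalIntegral.integral_const_mul]
    simpa [two_mul] using congrArg (r * ·) hper
  rw [hpolar, Measure.volume_eq_prod, setIntegral_prod F hint, intervalIntegral.integral_of_le hR,
    integral_Ioc_eq_integral_Ioo]
  simp_rw [hinner]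

lemma quarter_le_one_sub_inv_two_pow_pow (k : ℕ) :
    (1 / 4 : ℝ) ≤ (1 - 1 / 2 ^ (k + 1)) ^ 2 ^ (k + 1) := by
  have hx : (1 / 2 ^ (k + 1) : ℝ) ≤ 1 := by
    rw [div_le_one (by positivity)]; exact one_le_pow₀ one_le_two
  have hbernoulli : (1 / 2 : ℝ) ≤ (1 - 1 / 2 ^ (k + 1)) ^ 2 ^ k :=
    calc (1 / 2 : ℝ) = 1 + (2 ^ k : ℕ) * -(1 / 2 ^ (k + 1)) := by push_cast; field_simp; ring
      _ ≤ _ := by rw [sub_eq_add_neg]; exact one_add_mul_le_pow (by linarith) _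
  calc (1 / 4 : ℝ) = (1 / 2) ^ 2 := by norm_num
    _ ≤ ((1 - 1 / 2 ^ (k + 1)) ^ 2 ^ k) ^ 2 := by gcongr
    _ = (1 - 1 / 2 ^ (k + 1)) ^ 2 ^ (k + 1) := by rw [← pow_mul, ← pow_succ]

lemma ciSup_Ioo_zero_one_eq {φ : ℝ → ℝ} (hle : ∀ r ∈ Ioo (0:ℝ) 1, φ r ≤ φ 1)
    (hφ : ContinuousWithinAt φ (Ioo 0 1) 1) : ⨆ r : Ioo (0:ℝ) 1, φ r = φ 1 := by
  have : Nonempty (Ioo (0:ℝ) 1) := nonempty_Ioo_subtype one_pos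
  have : (𝓝[Ioo (0:ℝ) 1] 1).NeBot := right_nhdsWithin_Ioo_neBot one_pos
  have hbdd : BddAbove (range fun r : Ioo (0:ℝ) 1 => φ r) :=
    ⟨φ 1, by rintro _ ⟨r, rfl⟩; exact hle r r.2⟩
  refine le_antisymm (ciSup_le fun r => hle r r.2) (le_of_tendsto hφ ?_)
  filter_upwards [self_mem_nhdsWithin] with r hr
  exact le_ciSup hbdd ⟨r, hr⟩

lemma Pn_eq_monomialSum (n : ℕ) : Pn n = monomialSum (Finset.Icc 1 n) 1 (2 ^ ·) := by
  funext z; simp [Pn, monomialSum]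

lemma deriv_Pn (n : ℕ) :
    deriv (Pn n) = monomialSum (Finset.Icc 1 n) (fun k => 2 ^ k) (fun k => 2 ^ k - 1) := by
  funext z
  rw [Pn_eq_monomialSum, (hasDerivAt_monomialSum _ _ _ z).deriv]
  simp [monomialSum]

lemma injOn_two_pow_sub_one (s : Set ℕ) : s.InjOn fun k => 2 ^ k - 1 := fun j _ k _ hjk =>
  Nat.pow_right_injective le_rfl <| by
    have := Nat.one_le_two_pow (n := j); have := Nat.one_le_two_pow (n := k)
    simp only at hjk ⊢; omega

lemma circInt_Pn (n : ℕ) (r : ℝ) :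
    circInt (Pn n) 2 r = ∑ k ∈ Finset.Icc 1 n, r ^ (2 * 2 ^ k) := by
  have hinj : (Finset.Icc 1 n : Set ℕ).InjOn (2 ^ ·) :=
    (Nat.pow_right_injective le_rfl).injOn
  simp_rw [circInt, Real.rpow_two, ← circleMap_zero, Pn_eq_monomialSum,
    integral_norm_sq_monomialSum hinj]
  field_simp
  simp

lemma hardyNorm_Pn (n : ℕ) : hardyNorm 2 (Pn n) = √n := by
  simp_rw [hardyNorm, circInt_Pn, ← Real.sqrt_eq_rpow]
  rw [ciSup_Ioo_zero_one_eq (φ := fun r : ℝ => √(∑ k ∈ Finset.Icc 1 n, r ^ (2 * 2 ^ k)))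
    (fun r hr => Real.sqrt_le_sqrt <| Finset.sum_le_sum fun k _ =>
      by simpa using pow_le_one₀ hr.1.le hr.2.le) (by fun_prop : Continuous _).continuousWithinAt]
  simp

lemma continuous_mul_integral_norm_circleMap {f : ℂ → ℂ} (hf : Continuous f) :
    Continuous fun r : ℝ => r * ∫ t in (0:ℝ)..2 * π, ‖f (circleMap 0 r t)‖ := by
  fun_prop

lemma continuous_deriv_Pn (n : ℕ) : Continuous (deriv (Pn n)) := by
  rw [deriv_Pn]; unfold monomialSum; fun_prop

lemma integral_norm_deriv_Pn_le (n : ℕ) : ∫ z in ball (0:ℂ) 1, ‖deriv (Pn n) z‖ ≤ 2 * π * n := by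
  have hpt : ∀ r ∈ Icc (0:ℝ) 1, r * ∫ t in (0:ℝ)..2 * π, ‖deriv (Pn n) (circleMap 0 r t)‖
      ≤ ∑ k ∈ Finset.Icc 1 n, 2 * π * 2 ^ k * r ^ 2 ^ k := by
    intro r hr
    rw [deriv_Pn]
    refine (mul_le_mul_of_nonneg_left (integral_norm_monomialSum_le r) hr.1).trans_eq ?_
    rw [Finset.mul_sum, Finset.mul_sum]
    refine Finset.sum_congr rfl fun k _ => ?_
    rw [norm_pow, RCLike.norm_ofNat, abs_of_nonneg hr.1,
      ← mul_pow_sub_one (pow_ne_zero k two_ne_zero) r]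
    ring
  rw [integral_ball_eq_integral_circleMap (continuous_deriv_Pn n).norm zero_le_one]
  calc _ ≤ ∫ r in (0:ℝ)..1, ∑ k ∈ Finset.Icc 1 n, 2 * π * 2 ^ k * r ^ 2 ^ k :=
        intervalIntegral.integral_mono_on zero_le_one
          ((continuous_mul_integral_norm_circleMap (continuous_deriv_Pn n)).intervalIntegrable _ _)
          (by apply Continuous.intervalIntegrable; fun_prop) hpt
    _ = ∑ k ∈ Finset.Icc 1 n, 2 * π * (2 ^ k / (2 ^ k + 1)) := by
        rw [intervalIntegral.integral_finsetSum fun k _ => by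
          apply Continuous.intervalIntegrable; fun_prop]
        simp [div_eq_mul_inv, mul_assoc]
    _ ≤ ∑ _k ∈ Finset.Icc 1 n, 2 * π := Finset.sum_le_sum fun k _ => by
        have : (2:ℝ) ^ k / (2 ^ k + 1) ≤ 1 := by rw [div_le_one (by positivity)]; linarith
        nlinarith [pi_pos]
    _ = 2 * π * n := by simp [mul_comm]

lemma two_pi_mul_two_pow_mul_pow_le (n : ℕ) {k : ℕ} (hk : k ∈ Finset.Icc 1 n) {r : ℝ}
    (hr : 0 ≤ r) :
    2 * π * 2 ^ k * r ^ 2 ^ k ≤ r * ∫ t in (0:ℝ)..2 * π, ‖deriv (Pn n) (circleMap 0 r t)‖ := by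
  have hcoeff := two_pi_mul_norm_mul_pow_le_integral_norm_monomialSum
    (c := fun k => (2:ℂ) ^ k) (injOn_two_pow_sub_one _) hk r
  rw [norm_pow, RCLike.norm_ofNat, abs_of_nonneg hr, ← deriv_Pn] at hcoeff
  calc 2 * π * 2 ^ k * r ^ 2 ^ k = r * (2 * π * 2 ^ k * r ^ (2 ^ k - 1)) := by
        rw [← mul_pow_sub_one (pow_ne_zero k two_ne_zero) r]; ring
    _ ≤ _ := mul_le_mul_of_nonneg_left hcoeff hr

lemma pi_div_four_le_integral_annulus (n : ℕ) {k : ℕ} (hk : k < n) :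
    π / 4 ≤ ∫ r in (1 - 1 / 2 ^ (k + 1) : ℝ)..(1 - 1 / 2 ^ (k + 2)),
      r * ∫ t in (0:ℝ)..2 * π, ‖deriv (Pn n) (circleMap 0 r t)‖ := by
  have hab : (1 - 1 / 2 ^ (k + 1) : ℝ) ≤ 1 - 1 / 2 ^ (k + 2) := by
    gcongr <;> norm_num
  have hpt : ∀ r ∈ Icc (1 - 1 / 2 ^ (k + 1) : ℝ) (1 - 1 / 2 ^ (k + 2)),
      2 * π * 2 ^ (k + 1) * (1 / 4)
        ≤ r * ∫ t in (0:ℝ)..2 * π, ‖deriv (Pn n) (circleMap 0 r t)‖ := by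
    intro r hr
    have ha : (0:ℝ) ≤ 1 - 1 / 2 ^ (k + 1) := by
      rw [sub_nonneg, div_le_one (by positivity)]; exact one_le_pow₀ one_le_two
    refine le_trans ?_ (two_pi_mul_two_pow_mul_pow_le n (k := k + 1)
      (Finset.mem_Icc.mpr ⟨by omega, by omega⟩) (ha.trans hr.1))
    gcongr
    exact (quarter_le_one_sub_inv_two_pow_pow k).trans (pow_le_pow_left₀ ha hr.1 _)
  calc π / 4 = ∫ _ in (1 - 1 / 2 ^ (k + 1) : ℝ)..(1 - 1 / 2 ^ (k + 2)),
        2 * π * 2 ^ (k + 1) * (1 / 4) := by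
        rw [intervalIntegral.integral_const, smul_eq_mul]; field_simp; ring
    _ ≤ _ := intervalIntegral.integral_mono_on hab intervalIntegrable_const
        ((continuous_mul_integral_norm_circleMap (continuous_deriv_Pn n)).intervalIntegrable _ _)
        hpt

lemma le_integral_norm_deriv_Pn (n : ℕ) : π / 4 * n ≤ ∫ z in ball (0:ℂ) 1, ‖deriv (Pn n) z‖ := by
  set h : ℝ → ℝ := fun r => r * ∫ t in (0:ℝ)..2 * π, ‖deriv (Pn n) (circleMap 0 r t)‖
  have hcont : Continuous h := continuous_mul_integral_norm_circleMap (continuous_deriv_Pn n)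
  set a : ℕ → ℝ := fun k => 1 - 1 / 2 ^ (k + 1)
  have ha0 : 0 ≤ a 0 := by norm_num [a]
  have han : a 0 ≤ a n := by simp only [a]; gcongr <;> norm_num
  have han1 : a n ≤ 1 := by simp only [a]; linarith [show (0:ℝ) < 1 / 2 ^ (n + 1) by positivity]
  rw [integral_ball_eq_integral_circleMap (continuous_deriv_Pn n).norm zero_le_one]
  calc π / 4 * n = ∑ _k ∈ Finset.range n, π / 4 := by simp [mul_comm]
    _ ≤ ∑ k ∈ Finset.range n, ∫ r in a k..a (k + 1), h r :=
        Finset.sum_le_sum fun k hk => pi_div_four_le_integral_annulus n (Finset.mem_range.mp hk)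
    _ = ∫ r in a 0..a n, h r :=
        intervalIntegral.sum_integral_adjacent_intervals fun k _ => hcont.intervalIntegrable _ _
    _ ≤ ∫ r in (0:ℝ)..1, h r :=
        intervalIntegral.integral_mono_interval ha0 han han1
          ((ae_restrict_iff' measurableSet_Ioc).mpr <| Eventually.of_forall fun r hr =>
            mul_nonneg hr.1.le <| intervalIntegral.integral_nonneg (by positivity)
              fun _ _ => norm_nonneg _)
          (hcont.intervalIntegrable _ _)

theorem stmt19 :
    ∃ c₁ c₂ c : ℝ, 0 < c₁ ∧ 0 < c₂ ∧ 0 < c ∧ ∀ n : ℕ, 1 ≤ n →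
      (c₁ * n ≤ ∫ z in ball (0:ℂ) 1, ‖deriv (Pn n) z‖) ∧
      ((∫ z in ball (0:ℂ) 1, ‖deriv (Pn n) z‖) ≤ c₂ * n) ∧
      hardyNorm 2 (Pn n) = Real.sqrt n ∧
      c * Real.sqrt n ≤ (∫ z in ball (0:ℂ) 1, ‖deriv (Pn n) z‖) / hardyNorm 2 (Pn n) := by
  refine ⟨π / 4, 2 * π, π / 4, by positivity, by positivity, by positivity, fun n hn => ?_⟩
  have hlow := le_integral_norm_deriv_Pn n
  refine ⟨hlow, integral_norm_deriv_Pn_le n, hardyNorm_Pn n, ?_⟩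
  have hsqrt : 0 < √(n : ℝ) := Real.sqrt_pos.mpr (by exact_mod_cast hn)
  rw [hardyNorm_Pn, le_div_iff₀ hsqrt, mul_assoc, Real.mul_self_sqrt n.cast_nonneg]
  exact hlow
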